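/- Let ρ and σ be two well agreeing near weights on R. Then for all f, g ∈ R \ {0}: (4) ρ̃(fg) = ρ̃(f) + ρ̃(g); and (5) if f + g ≠ 0 then ρ̃(f + g) ≤ max{ρ̃(f), ρ̃(g)}. -/

import Mathlib

structure NearWeight (F R : Type*) [Field F] [CommRing R] [Algebra F R] where
  w : R → WithBot ℕ
  N0 : ∀ f : R, w f = ⊥ ↔ f = 0
  N1 : ∀ (c : F) (f : R), c ≠ 0 → w (c • f) = w f
  N2 : ∀ f g : R, w (f + g) ≤ max (w f) (w g)
  N3 : ∀ f g h : R, w f < w g → w (f * h) ≤ w (g * h)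
  N3' : ∀ f g h : R, w f < w g → w 1 < w h → w (f * h) < w (g * h)
  N4 : ∀ f g : R, w 1 < w f → w 1 < w g → w f = w g →
      ∃ c : F, c ≠ 0 ∧ w (f - c • g) < w f
  N5 : ∀ f g : R, w (f * g) ≤ w f + w g
  N5' : ∀ f g : R, w 1 < w f → w 1 < w g → w (f * g) = w f + w g
  norm0 : ∀ f : R, f ≠ 0 → w f ≤ w 1 → w f = 0
  normgcd : ∀ d : ℕ, (∀ f : R, w 1 < w f → ∃ k : ℕ, w f = ((d * k : ℕ) : WithBot ℕ)) → d = 1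

namespace NearWeight

variable {F R : Type*} [Field F] [CommRing R] [Algebra F R]

def U (ρ : NearWeight F R) : Set R := {r | ρ.w r ≤ ρ.w 1}

def M (ρ : NearWeight F R) : Set R := {r | ρ.w 1 < ρ.w r}

def nval (ρ : NearWeight F R) (f : R) : ℕ := (ρ.w f).unbotD 0

def Hset (ρ σ : NearWeight F R) (S : Set R) : Set (ℕ × ℕ) :=
  {p | ∃ f ∈ S, f ≠ 0 ∧ (ρ.nval f, σ.nval f) = p}

def WellAgreeing (ρ σ : NearWeight F R) : Prop :=
  (Hset ρ σ Set.univ)ᶜ.Finite ∧ ρ.U ∩ σ.U = Set.range (algebraMap F R)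

noncomputable def xH (ρ σ : NearWeight F R) (n : ℕ) : ℕ :=
  sInf {m | (m, n) ∈ Hset ρ σ Set.univ}

noncomputable def yH (ρ σ : NearWeight F R) (n : ℕ) : ℕ :=
  sInf {m | (n, m) ∈ Hset ρ σ Set.univ}

def lub (a b : ℕ × ℕ) : ℕ × ℕ := (max a.1 b.1, max a.2 b.2)

noncomputable def Gamma (ρ σ : NearWeight F R) : Set (ℕ × ℕ) :=
  {p | ∃ m : ℕ, p = (m, yH ρ σ m)} ∪ {p | ∃ n : ℕ, p = (xH ρ σ n, n)}

def Hbarx (ρ σ : NearWeight F R) : Set ℕ := {m | (m, 0) ∈ Hset ρ σ Set.univ}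

def Hbary (ρ σ : NearWeight F R) : Set ℕ := {n | (0, n) ∈ Hset ρ σ Set.univ}

noncomputable def GammaTilde (ρ σ : NearWeight F R) : Set (ℕ × ℕ) :=
  {p | ∃ m : ℕ, m ∉ Hbarx ρ σ ∧ p = (m, yH ρ σ m)}

def Delta (p : ℕ × ℕ) : Set (ℕ × ℕ) :=
  {q | (q.1 = p.1 ∧ q.2 < p.2) ∨ (q.2 = p.2 ∧ q.1 < p.1)}

noncomputable def tw (ρ : NearWeight F R) (f : R) : ℤ :=
  sInf {z : ℤ | ∃ g ∈ ρ.M, z = (ρ.nval (f * g) : ℤ) - (ρ.nval g : ℤ)}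

end NearWeight

/-! By N5, ρ is additive on `M_ρ`, so `ρ̃ f = ρ(fh) - ρ(h)` for every `h ∈ M_ρ` with
`fh ∈ M_ρ`. Once such an `h` exists for every `f ≠ 0`, both claims follow by evaluating
`ρ̃` at a common multiplier and using N5 and N2.

Existence is where well agreement enters. Suppose `fv ∉ M_ρ` for all `v ∈ M_ρ`. Then every
such `fv` lies in `M_σ`, since otherwise `fv ∈ U_ρ ∩ U_σ` would be a nonzero scalar. Take
`v₀ ∈ M_ρ` minimizing `σ(fv₀)` and `u ∈ M_ρ ∩ U_σ`, which exists because `H` is cofinite.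
Then `σ(fv₀u) = σ(fv₀)`, and N4 yields `v = v₀ - c v₀u ∈ M_ρ` with `σ(fv) < σ(fv₀)`. -/

namespace NearWeight

variable {F R : Type*} [Field F] [CommRing R] [Algebra F R] (ρ : NearWeight F R)

theorem M_nonempty : ρ.M.Nonempty := by
  by_contra h
  exact zero_ne_one (ρ.normgcd 0 fun f hf => (h ⟨f, hf⟩).elim)

theorem w_one : ρ.w 1 = 0 := by
  obtain ⟨m, hm⟩ := ρ.M_nonempty
  have : Nontrivial R := nontrivial_of_ne m 1 fun h => lt_irrefl (ρ.w 1) (by rwa [h] at hm)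
  exact ρ.norm0 1 one_ne_zero le_rfl

theorem w_eq_nval {f : R} (hf : f ≠ 0) : ρ.w f = ρ.nval f := by
  obtain ⟨n, hn⟩ := WithBot.ne_bot_iff_exists.mp (mt (ρ.N0 f).mp hf)
  rw [nval, ← hn]
  rfl

theorem nval_zero : ρ.nval 0 = 0 := by
  rw [nval, (ρ.N0 0).mpr rfl, WithBot.unbotD_bot]

theorem mem_M_iff {f : R} : f ∈ ρ.M ↔ 0 < ρ.nval f := by
  rcases eq_or_ne f 0 with rfl | hf
  · simp [M, nval_zero, (ρ.N0 0).mpr rfl]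
  · rw [M, Set.mem_ofPred_eq, w_one, w_eq_nval ρ hf]
    exact_mod_cast Iff.rfl

theorem notMem_M_iff {f : R} : f ∉ ρ.M ↔ ρ.nval f = 0 := by
  rw [mem_M_iff, Nat.pos_iff_ne_zero, not_not]

theorem nval_smul {c : F} (hc : c ≠ 0) (f : R) : ρ.nval (c • f) = ρ.nval f := by
  rw [nval, ρ.N1 c f hc, nval]

theorem nval_neg (f : R) : ρ.nval (-f) = ρ.nval f := by
  rw [← neg_one_smul F f, ρ.nval_smul (neg_ne_zero.mpr one_ne_zero)]

theorem nval_add_le (f g : R) : ρ.nval (f + g) ≤ max (ρ.nval f) (ρ.nval g) := by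
  have hmono : Monotone (WithBot.unbotD (0 : ℕ)) := fun x y hxy => by
    cases x
    · exact Nat.zero_le _
    · exact WithBot.unbotD_mono WithBot.coe_ne_bot hxy
  simpa only [nval, hmono.map_max] using hmono (ρ.N2 f g)

theorem nval_sub_le (f g : R) : ρ.nval (f - g) ≤ max (ρ.nval f) (ρ.nval g) := by
  simpa only [sub_eq_add_neg, nval_neg] using ρ.nval_add_le f (-g)

theorem nval_mul_le (f g : R) : ρ.nval (f * g) ≤ ρ.nval f + ρ.nval g := by
  rcases eq_or_ne (f * g) 0 with hfg | hfg
  · rw [hfg, nval_zero]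
    exact Nat.zero_le _
  · have h5 := ρ.N5 f g
    rw [ρ.w_eq_nval hfg, ρ.w_eq_nval (left_ne_zero_of_mul hfg),
      ρ.w_eq_nval (right_ne_zero_of_mul hfg)] at h5
    exact_mod_cast h5

variable {ρ}

theorem ne_zero_of_mem_M {f : R} (hf : f ∈ ρ.M) : f ≠ 0 := by
  rintro rfl
  rw [mem_M_iff, nval_zero] at hf
  exact lt_irrefl 0 hf

theorem nval_mul_of_mem_M {f g : R} (hf : f ∈ ρ.M) (hg : g ∈ ρ.M) :
    ρ.nval (f * g) = ρ.nval f + ρ.nval g := by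
  have h5 := ρ.N5' f g hf hg
  rw [ρ.w_eq_nval (ne_zero_of_mem_M hf), ρ.w_eq_nval (ne_zero_of_mem_M hg)] at h5
  rw [nval, h5]
  norm_cast

theorem mul_mem_M {f g : R} (hf : f ∈ ρ.M) (hg : g ∈ ρ.M) : f * g ∈ ρ.M := by
  rw [mem_M_iff, nval_mul_of_mem_M hf hg]
  exact Nat.add_pos_left ((mem_M_iff ρ).mp hf) _

theorem mul_ne_zero_of_mem_M {f v : R} (hf : f ≠ 0) (hv : v ∈ ρ.M) : f * v ≠ 0 := by
  intro hfv
  have h3 := ρ.N3 1 v f hv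
  rw [one_mul, mul_comm, hfv, (ρ.N0 0).mpr rfl, le_bot_iff, ρ.N0] at h3
  exact hf h3

theorem isLeast_tw {f h : R} (hh : h ∈ ρ.M) (hfh : f * h ∈ ρ.M) :
    IsLeast {z : ℤ | ∃ g ∈ ρ.M, z = (ρ.nval (f * g) : ℤ) - (ρ.nval g : ℤ)}
      ((ρ.nval (f * h) : ℤ) - (ρ.nval h : ℤ)) := by
  refine ⟨⟨h, hh, rfl⟩, ?_⟩
  rintro _ ⟨g, hg, rfl⟩
  have hadd := nval_mul_of_mem_M hfh hg
  have hle := ρ.nval_mul_le (f * g) h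
  rw [mul_right_comm] at hle
  omega

theorem tw_eq {f h : R} (hh : h ∈ ρ.M) (hfh : f * h ∈ ρ.M) :
    ρ.tw f = (ρ.nval (f * h) : ℤ) - (ρ.nval h : ℤ) :=
  (isLeast_tw hh hfh).csInf_eq

theorem tw_le {f g h : R} (hh : h ∈ ρ.M) (hfh : f * h ∈ ρ.M) (hg : g ∈ ρ.M) :
    ρ.tw f ≤ (ρ.nval (f * g) : ℤ) - (ρ.nval g : ℤ) :=
  tw_eq hh hfh ▸ (isLeast_tw hh hfh).2 ⟨g, hg, rfl⟩

theorem tw_mul {f g a b : R} (ha : a ∈ ρ.M) (hfa : f * a ∈ ρ.M) (hb : b ∈ ρ.M)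
    (hgb : g * b ∈ ρ.M) : ρ.tw (f * g) = ρ.tw f + ρ.tw g := by
  have hfgab : f * g * (a * b) = f * a * (g * b) := by ring
  rw [tw_eq ha hfa, tw_eq hb hgb, tw_eq (mul_mem_M ha hb) (hfgab ▸ mul_mem_M hfa hgb), hfgab,
    nval_mul_of_mem_M hfa hgb, nval_mul_of_mem_M ha hb]
  push_cast
  ring

theorem tw_add_le {f g a b : R} (ha : a ∈ ρ.M) (hfa : f * a ∈ ρ.M) (hb : b ∈ ρ.M)
    (hgb : g * b ∈ ρ.M) (hfg : ∃ c ∈ ρ.M, (f + g) * c ∈ ρ.M) :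
    ρ.tw (f + g) ≤ max (ρ.tw f) (ρ.tw g) := by
  obtain ⟨c, hc, hfgc⟩ := hfg
  have hle := tw_le hc hfgc (mul_mem_M ha hb)
  have hadd := ρ.nval_add_le (f * a * b) (g * b * a)
  rw [nval_mul_of_mem_M hfa hb, nval_mul_of_mem_M hgb ha,
    show f * a * b + g * b * a = (f + g) * (a * b) by ring] at hadd
  rw [nval_mul_of_mem_M ha hb] at hle
  rw [tw_eq ha hfa, tw_eq hb hgb]
  omega

variable {σ : NearWeight F R}

namespace WellAgreeing

theorem mul_mem_M_of_notMem_M (hwa : WellAgreeing ρ σ) {a x : R} (ha : a ≠ 0) (haρ : a ∉ ρ.M)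
    (haσ : a ∉ σ.M) (hx : x ∈ ρ.M) : a * x ∈ ρ.M := by
  obtain ⟨c, rfl⟩ : a ∈ Set.range (algebraMap F R) :=
    hwa.2 ▸ ⟨(not_lt.mp haρ : ρ.w a ≤ ρ.w 1), (not_lt.mp haσ : σ.w a ≤ σ.w 1)⟩
  have hc : c ≠ 0 := by
    rintro rfl
    exact ha (map_zero _)
  rw [← Algebra.smul_def]
  show ρ.w 1 < ρ.w (c • x)
  rw [ρ.N1 c x hc]
  exact hx

theorem exists_mem_M_notMem_M (hwa : WellAgreeing ρ σ) : ∃ u ∈ ρ.M, u ∉ σ.M := by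
  have hfin : {n : ℕ | (n, 0) ∉ Hset ρ σ Set.univ}.Finite :=
    hwa.1.preimage (fun _ _ _ _ h => congrArg Prod.fst h)
  obtain ⟨n, hn, hpos⟩ := hfin.infinite_compl.exists_gt 0
  obtain ⟨u, -, -, hu⟩ := not_not.mp hn
  rw [Prod.mk.injEq] at hu
  exact ⟨u, (mem_M_iff ρ).mpr (hu.1 ▸ hpos), (notMem_M_iff σ).mpr hu.2⟩

theorem exists_mem_M_mul_mem_M (hwa : WellAgreeing ρ σ) {f : R} (hf : f ≠ 0) :
    ∃ v ∈ ρ.M, f * v ∈ ρ.M := by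
  by_contra! hcon
  have hσ : ∀ v ∈ ρ.M, f * v ∈ σ.M := fun v hv => by
    by_contra hvσ
    obtain ⟨m, hm⟩ := ρ.M_nonempty
    have := hwa.mul_mem_M_of_notMem_M (mul_ne_zero_of_mem_M hf hv) (hcon v hv) hvσ hm
    exact hcon (v * m) (mul_mem_M hv hm) (by rwa [← mul_assoc])
  set v₀ := Function.argminOn (fun v => σ.nval (f * v)) ρ.M ρ.M_nonempty
  have hv₀ : v₀ ∈ ρ.M := Function.argminOn_mem _ _ _
  have hmin : ∀ v ∈ ρ.M, σ.nval (f * v₀) ≤ σ.nval (f * v) := fun v hv =>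
    Function.argminOn_le (fun v => σ.nval (f * v)) ρ.M hv
  obtain ⟨u, huρ, huσ⟩ := hwa.exists_mem_M_notMem_M
  have hv₁ : v₀ * u ∈ ρ.M := mul_mem_M hv₀ huρ
  have heq : σ.w (f * v₀) = σ.w (f * (v₀ * u)) := by
    have hle := σ.nval_mul_le (f * v₀) u
    rw [(notMem_M_iff σ).mp huσ, add_zero, mul_assoc] at hle
    rw [σ.w_eq_nval (ne_zero_of_mem_M (hσ v₀ hv₀)), σ.w_eq_nval (ne_zero_of_mem_M (hσ _ hv₁)),
      le_antisymm (hmin _ hv₁) hle]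
  obtain ⟨c, hc, hlt⟩ := σ.N4 _ _ (hσ v₀ hv₀) (hσ _ hv₁) heq
  have hv : v₀ - c • (v₀ * u) ∈ ρ.M := by
    have hsub := ρ.nval_sub_le v₀ (v₀ - c • (v₀ * u))
    rw [sub_sub_cancel, ρ.nval_smul hc, nval_mul_of_mem_M hv₀ huρ] at hsub
    rw [mem_M_iff] at huρ ⊢
    omega
  rw [← mul_smul_comm, ← mul_sub, σ.w_eq_nval (ne_zero_of_mem_M (hσ _ hv)),
    σ.w_eq_nval (ne_zero_of_mem_M (hσ v₀ hv₀))] at hlt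
  exact (hmin _ hv).not_gt (by exact_mod_cast hlt)

end WellAgreeing

end NearWeight

variable {F R : Type*} [Field F] [CommRing R] [Algebra F R]

theorem stmt18_general
    (ρ σ : NearWeight F R) (hwa : NearWeight.WellAgreeing ρ σ)
    (f g : R) (hf : f ≠ 0) (hg : g ≠ 0) :
    NearWeight.tw ρ (f * g) = NearWeight.tw ρ f + NearWeight.tw ρ g ∧
    (f + g ≠ 0 → NearWeight.tw ρ (f + g) ≤ max (NearWeight.tw ρ f) (NearWeight.tw ρ g)) := by
  obtain ⟨a, ha, hfa⟩ := hwa.exists_mem_M_mul_mem_M hf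
  obtain ⟨b, hb, hgb⟩ := hwa.exists_mem_M_mul_mem_M hg
  exact ⟨NearWeight.tw_mul ha hfa hb hgb, fun hfg =>
    NearWeight.tw_add_le ha hfa hb hgb (hwa.exists_mem_M_mul_mem_M hfg)⟩

theorem stmt18
    (hinj : Function.Injective (algebraMap F R))
    (hsur : ¬ Function.Surjective (algebraMap F R))
    (ρ σ : NearWeight F R) (hwa : NearWeight.WellAgreeing ρ σ)
    (f g : R) (hf : f ≠ 0) (hg : g ≠ 0) :
    NearWeight.tw ρ (f * g) = NearWeight.tw ρ f + NearWeight.tw ρ g ∧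
    (f + g ≠ 0 → NearWeight.tw ρ (f + g) ≤ max (NearWeight.tw ρ f) (NearWeight.tw ρ g)) :=
  stmt18_general ρ σ hwa f g hf hg
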